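/- For every finite simple graph G and every vertex v of G, if G' denotes the graph obtained from G by choosing one vertex in each connected component of G, adding two new vertices w and w', and adding an edge from w to each chosen vertex and to w', then G' is connected and τ(G') = τ(G) + 1. Consequently, for two finite simple graphs G and H, τ(G) ≥ τ(H) if and only if τ(G') ≥ τ(H'). -/

import Mathlib

open SimpleGraph

/-- `C` is a vertex cover of `G`: every edge of `G` has an endpoint in `C`. -/
def IsVertexCover {V : Type} (G : SimpleGraph V) (C : Set V) : Prop :=
  ∀ ⦃u v : V⦄, G.Adj u v → u ∈ C ∨ v ∈ C

/-- `C` is a connected vertex cover of `G`: a vertex cover inducing a connected subgraph. -/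
def IsConnectedVertexCover {V : Type} (G : SimpleGraph V) (C : Set V) : Prop :=
  _root_.IsVertexCover G C ∧ (G.induce C).Connected

/-- The vertex cover number `τ(G)`. -/
noncomputable def tau {V : Type} (G : SimpleGraph V) : ℕ :=
  sInf {n | ∃ C : Set V, _root_.IsVertexCover G C ∧ C.ncard = n}

/-- The connected vertex cover number `τ_c(G)`. -/
noncomputable def tauc {V : Type} (G : SimpleGraph V) : ℕ :=
  sInf {n | ∃ C : Set V, IsConnectedVertexCover G C ∧ C.ncard = n}

/-- The graph obtained from `G` by adding two new vertices `w = Sum.inr false` and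
`w' = Sum.inr true`, and adding an edge from `w` to `w'` and from `w` to the chosen
representative `rep K` of each connected component `K` of `G`. -/
def augment {V : Type} (G : SimpleGraph V) (rep : G.ConnectedComponent → V) :
    SimpleGraph (V ⊕ Bool) :=
  SimpleGraph.fromRel (fun a b =>
    match a, b with
    | Sum.inl u, Sum.inl v => G.Adj u v
    | Sum.inr false, Sum.inl v => v ∈ Set.range rep
    | Sum.inr false, Sum.inr true => True
    | _, _ => False)

/-! Adding the hub `w` to a minimum vertex cover of `G` covers `G'`. Conversely, a vertex cover
of `G'` restricts to a vertex cover of `G` on the old vertices and must contain `w` or `w'` to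
cover the edge `ww'`; hence `τ(G') = τ(G) + 1` for any choice of representatives. Connectedness
uses the representatives: every vertex reaches the representative of its component, which is
adjacent to `w`. -/

lemma tau_le_ncard {V : Type} {G : SimpleGraph V} {C : Set V} (hC : _root_.IsVertexCover G C) :
    tau G ≤ C.ncard :=
  Nat.sInf_le ⟨C, hC, rfl⟩

lemma exists_isVertexCover_ncard_eq_tau {V : Type} [Finite V] (G : SimpleGraph V) :
    ∃ C : Set V, _root_.IsVertexCover G C ∧ C.ncard = tau G :=
  Nat.sInf_mem (s := {n | ∃ C : Set V, _root_.IsVertexCover G C ∧ C.ncard = n})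
    ⟨_, Set.univ, fun _ _ _ => .inl trivial, rfl⟩

lemma IsVertexCover.preimage {V W : Type} {G : SimpleGraph V} {H : SimpleGraph W} (f : G →g H)
    {C : Set W} (hC : _root_.IsVertexCover H C) : _root_.IsVertexCover G (f ⁻¹' C) :=
  fun _ _ h => hC (f.map_adj h)

lemma ncard_insert_inr_image_inl {V β : Type} (b : β) {C : Set V} (hC : C.Finite) :
    (insert (.inr b) (.inl '' C) : Set (V ⊕ β)).ncard = C.ncard + 1 := by
  rw [Set.ncard_insert_of_notMem (by simp) (hC.image _),
    Set.ncard_image_of_injective _ Sum.inl_injective]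

section augment

variable {V : Type} {G : SimpleGraph V} {rep : G.ConnectedComponent → V}

@[simp] lemma augment_adj_inl_inl {u v : V} :
    (augment G rep).Adj (.inl u) (.inl v) ↔ G.Adj u v := by
  simp only [augment, fromRel_adj]
  exact ⟨fun h => h.2.elim id .symm, fun h => ⟨by simpa using h.ne, .inl h⟩⟩

@[simp] lemma augment_adj_inr_false_inl {v : V} :
    (augment G rep).Adj (.inr false) (.inl v) ↔ v ∈ Set.range rep := by
  simp [augment]

@[simp] lemma augment_adj_inr_false_inr_true : (augment G rep).Adj (.inr false) (.inr true) := by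
  simp [augment]

@[simp] lemma augment_adj_inr_true {a : V ⊕ Bool} :
    (augment G rep).Adj (.inr true) a ↔ a = .inr false := by
  rcases a with v | _ | _ <;> simp [augment]

variable (G rep) in
def augmentHom : G →g augment G rep :=
  ⟨Sum.inl, augment_adj_inl_inl.2⟩

lemma augment_connected (hrep : ∀ K : G.ConnectedComponent, G.connectedComponentMk (rep K) = K) :
    (augment G rep).Connected := by
  refine connected_iff_exists_forall_reachable _ |>.2 ⟨.inr false, ?_⟩
  rintro (v | _ | _)
  · have hv : G.Reachable (rep (G.connectedComponentMk v)) v := ConnectedComponent.exact (hrep _)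
    exact (Adj.reachable (augment_adj_inr_false_inl.2 (Set.mem_range_self _))).trans
      (hv.map (augmentHom G rep))
  · rfl
  · exact Adj.reachable (by simp)

lemma IsVertexCover.augment {C : Set V} (hC : _root_.IsVertexCover G C) :
    _root_.IsVertexCover (augment G rep) (insert (.inr false) (.inl '' C)) := by
  rintro (u | _ | _) (v | _ | _) h <;> simp_all
  · exact hC h
  · simpa using h.symm

variable [Finite V]

variable (G rep) in
theorem tau_augment : tau (augment G rep) = tau G + 1 := by
  apply le_antisymm
  · obtain ⟨C, hC, hcard⟩ := exists_isVertexCover_ncard_eq_tau G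
    calc tau (augment G rep) ≤ (insert (.inr false) (.inl '' C) : Set (V ⊕ Bool)).ncard :=
          tau_le_ncard hC.augment
      _ = tau G + 1 := by rw [ncard_insert_inr_image_inl _ C.toFinite, hcard]
  · obtain ⟨C', hC', hcard'⟩ := exists_isVertexCover_ncard_eq_tau (augment G rep)
    obtain ⟨b, hb⟩ : ∃ b, (.inr b : V ⊕ Bool) ∈ C' := by
      rcases hC' (augment_adj_inr_false_inr_true (rep := rep)) with h | h
      exacts [⟨_, h⟩, ⟨_, h⟩]
    have hsub : insert (.inr b) (.inl '' (.inl ⁻¹' C')) ⊆ C' :=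
      Set.insert_subset hb (Set.image_preimage_subset _ _)
    calc tau G + 1 ≤ (Sum.inl ⁻¹' C' : Set V).ncard + 1 :=
          Nat.add_le_add_right (tau_le_ncard (hC'.preimage (augmentHom G rep))) 1
      _ = (insert (.inr b) (.inl '' (.inl ⁻¹' C')) : Set (V ⊕ Bool)).ncard :=
          (ncard_insert_inr_image_inl _ (Set.toFinite _)).symm
      _ ≤ tau (augment G rep) := hcard' ▸ Set.ncard_le_ncard hsub

end augment

/-- The augmented graph `G'` (obtained by choosing one vertex in each connected
component of `G`, adding two new vertices `w, w'`, and joining `w` to `w'` and to all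
chosen vertices) is connected and satisfies `τ(G') = τ(G) + 1`; consequently, for two
graphs `G` and `H`, `τ(G) ≥ τ(H)` iff `τ(G') ≥ τ(H')`. -/
theorem augment_tau :
    (∀ {V : Type} [Fintype V] (G : SimpleGraph V) (rep : G.ConnectedComponent → V),
      (∀ K : G.ConnectedComponent, G.connectedComponentMk (rep K) = K) →
      (augment G rep).Connected ∧ tau (augment G rep) = tau G + 1) ∧
    (∀ {V W : Type} [Fintype V] [Fintype W] (G : SimpleGraph V) (H : SimpleGraph W)
      (repG : G.ConnectedComponent → V) (repH : H.ConnectedComponent → W),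
      (∀ K : G.ConnectedComponent, G.connectedComponentMk (repG K) = K) →
      (∀ K : H.ConnectedComponent, H.connectedComponentMk (repH K) = K) →
      (tau H ≤ tau G ↔ tau (augment H repH) ≤ tau (augment G repG))) :=
  ⟨fun G rep hrep => ⟨augment_connected hrep, tau_augment G rep⟩,
    fun G H repG repH _ _ => by rw [tau_augment G repG, tau_augment H repH]; omega⟩
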